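/- arXiv:2312.15886 — 2 statements merged into one kernel-verified Lean document; each statement's English description precedes it below -/
import Mathlib

section
/- If λ_0, ..., λ_{k-1} are the (distinct) roots of A(z) = z^k - q z^{k-1} - q p z^{k-2} - ... - q p^{k-1} and p ≠ k/(k+1), then for all n ≥ k, f_k(n) = (p^k/(k+1)) Σ_{j=0}^{k-1} λ_j^{n-k} (λ_j - p)/(λ_j - k/(k+1)). -/
open Finset

attribute [local instance] Classical.propDecidable

/-- `hasRunEnd k n ω m` : in the outcome string `ω` of `n` Bernoulli trials, a run of
`k` consecutive successes ends at trial `m` (trials `m-k+1, ..., m` are successes). -/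
def hasRunEnd (k n : ℕ) (ω : Fin n → Bool) (m : ℕ) : Prop :=
  k ≤ m ∧ m ≤ n ∧ ∀ j : Fin n, m - k ≤ (j : ℕ) → (j : ℕ) < m → ω j = true

/-- The first run of `k` consecutive successes is completed exactly at trial `n`. -/
def firstRun (k n : ℕ) (ω : Fin n → Bool) : Prop :=
  hasRunEnd k n ω n ∧ ∀ m < n, ¬ hasRunEnd k n ω m

/-- The pmf of the geometric distribution of order `k`:
`fk k p n = P(N_k = n)` where `N_k` is the waiting time for the first run of `k`
consecutive successes in i.i.d. Bernoulli(`p`) trials; each outcome string contributes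
`p^{#successes} (1-p)^{#failures}`. -/
noncomputable def fk (k : ℕ) (p : ℝ) (n : ℕ) : ℝ :=
  ∑ ω ∈ Finset.univ.filter (fun ω : Fin n → Bool => firstRun k n ω),
    p ^ (Finset.univ.filter (fun i => ω i = true)).card *
      (1 - p) ^ (Finset.univ.filter (fun i => ω i = false)).card

open Polynomial


lemma fk_of_lt {k n : ℕ} (p : ℝ) (h : n < k) : fk k p n = 0 := by
  unfold fk
  rw [Finset.filter_false_of_mem, Finset.sum_empty]
  intro ω _ hω
  have := hω.1.1
  omega

lemma fk_self {k : ℕ} (hk : 1 ≤ k) (p : ℝ) : fk k p k = p ^ k := by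
  unfold fk
  have hset : Finset.univ.filter (fun ω : Fin k → Bool => firstRun k k ω)
      = {fun _ => true} := by
    ext ω
    simp only [Finset.mem_filter, Finset.mem_univ, true_and, Finset.mem_singleton]
    constructor
    · intro h
      funext l
      exact h.1.2.2 l (by omega) l.isLt
    · intro h
      subst h
      refine ⟨⟨le_refl k, le_refl k, fun l _ _ => rfl⟩, ?_⟩
      intro m hm hRE
      have := hRE.1
      omega
  rw [hset, Finset.sum_singleton]
  have h1 : (Finset.univ.filter (fun i : Fin k => (fun _ => true) i = true)) = Finset.univ := by
    ext; simp
  have h2 : (Finset.univ.filter (fun i : Fin k => (fun _ => true) i = false)) = ∅ := by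
    ext; simp
  rw [h1, h2]
  simp

noncomputable def wtf (n : ℕ) (p : ℝ) (ω : Fin n → Bool) : ℕ → ℝ :=
  fun t => if h : t < n then (if ω ⟨t, h⟩ = true then p else 1-p) else 1

lemma wt_prod {n : ℕ} (p : ℝ) (ω : Fin n → Bool) :
    p ^ (Finset.univ.filter (fun i => ω i = true)).card
      * (1-p) ^ (Finset.univ.filter (fun i => ω i = false)).card
    = ∏ t ∈ Finset.range n, wtf n p ω t := by
  rw [← Fin.prod_univ_eq_prod_range]
  have h1 : ∀ i : Fin n, wtf n p ω (i : ℕ) = if ω i = true then p else 1-p := by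
    intro i
    rw [wtf, dif_pos i.isLt]
  rw [Finset.prod_congr rfl (fun i _ => h1 i), Finset.prod_ite, Finset.prod_const,
    Finset.prod_const]
  have h2 : Finset.univ.filter (fun i : Fin n => ¬ ω i = true)
      = Finset.univ.filter (fun i => ω i = false) := by
    ext i
    simp
  rw [h2]

lemma firstRun_shift {k n j : ℕ} (hk : 1 ≤ k) (hkn : k < n) (hj : j < min (n-k) k)
    (ω : Fin n → Bool)
    (hpre : ∀ l : Fin n, (l:ℕ) < j → ω l = true)
    (hj0 : ∀ l : Fin n, (l:ℕ) = j → ω l = false) :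
    (firstRun k n ω ↔
      firstRun k (n-1-j) (fun l : Fin (n-1-j) => ω ⟨j+1+(l:ℕ), by have := l.2; omega⟩)) := by
  have hjn : j < n := by omega
  set ω' : Fin (n-1-j) → Bool :=
    fun l : Fin (n-1-j) => ω ⟨j+1+(l:ℕ), by have := l.2; omega⟩ with hw'
  have hRE : ∀ m, m ≤ n → (hasRunEnd k n ω m ↔
      (k + (j+1) ≤ m ∧ hasRunEnd k (n-1-j) ω' (m - (j+1)))) := by
    intro m hm
    constructor
    · rintro ⟨h1, h2, h3⟩
      have hki : k + (j+1) ≤ m := by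
        by_contra hcon
        have hb := h3 ⟨j, hjn⟩ (by simp; omega) (by simp; omega)
        rw [hj0 ⟨j, hjn⟩ rfl] at hb
        exact absurd hb (by simp)
      refine ⟨hki, ⟨by omega, by omega, ?_⟩⟩
      intro l' hl1 hl2
      have hl'2 := l'.2
      have hb := h3 ⟨j+1+(l':ℕ), by omega⟩ (by simp; omega) (by simp; omega)
      exact hb
    · rintro ⟨hki, ⟨h1, h2, h3⟩⟩
      refine ⟨by omega, hm, ?_⟩
      intro l hl1 hl2
      have hlge : j+1 ≤ (l:ℕ) := by omega
      have hl' : (l:ℕ) - (j+1) < n - 1 - j := by have := l.2; omega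
      have hb := h3 ⟨(l:ℕ)-(j+1), hl'⟩ (by simp; omega) (by simp; omega)
      rw [hw'] at hb
      simp only at hb
      have : (⟨j+1+((l:ℕ)-(j+1)), by have := l.2; omega⟩ : Fin n) = l := by
        apply Fin.ext
        simp
        omega
      rwa [this] at hb
  constructor
  · rintro ⟨hend, hmin⟩
    have h1 := (hRE n le_rfl).1 hend
    constructor
    · have := h1.2
      rwa [show n - (j+1) = n-1-j by omega] at this
    · intro m' hm' hREm'
      apply hmin (m' + (j+1)) (by omega)
      apply (hRE (m'+(j+1)) (by omega)).2
      refine ⟨by have := hREm'.1; omega, ?_⟩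
      rwa [show m'+(j+1)-(j+1) = m' by omega]
  · rintro ⟨hend, hmin⟩
    constructor
    · apply (hRE n le_rfl).2
      refine ⟨by omega, ?_⟩
      rwa [show n - (j+1) = n-1-j by omega]
    · intro m hm hREm
      have h2 := (hRE m (le_of_lt hm)).1 hREm
      exact hmin (m - (j+1)) (by omega) h2.2

lemma sum_fiber {k n j : ℕ} (hk : 1 ≤ k) (p : ℝ) (hkn : k < n) (hj : j < min (n-k) k) :
    ∑ ω ∈ Finset.univ.filter (fun ω : Fin n → Bool => firstRun k n ω
          ∧ (∀ l : Fin n, (l:ℕ) < j → ω l = true) ∧ (∀ l : Fin n, (l:ℕ) = j → ω l = false)),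
        p ^ (Finset.univ.filter (fun i => ω i = true)).card
          * (1-p) ^ (Finset.univ.filter (fun i => ω i = false)).card
    = (1-p) * p^j * fk k p (n-1-j) := by
  rw [fk, Finset.mul_sum]
  refine Finset.sum_nbij'
    (i := fun ω => fun l : Fin (n-1-j) => ω ⟨j+1+(l:ℕ), by have := l.2; omega⟩)
    (j := fun ω' => fun l : Fin n =>
      if h1 : (l:ℕ) < j then true else if h2 : (l:ℕ) = j then false
      else ω' ⟨(l:ℕ)-(j+1), by have := l.2; omega⟩)
    ?_ ?_ ?_ ?_ ?_
  · intro ω hω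
    simp only [Finset.mem_filter, Finset.mem_univ, true_and] at hω ⊢
    exact (firstRun_shift hk hkn hj ω hω.2.1 hω.2.2).1 hω.1
  · intro ω' hω'
    simp only [Finset.mem_filter, Finset.mem_univ, true_and] at hω' ⊢
    set ω : Fin n → Bool := fun l : Fin n =>
      if h1 : (l:ℕ) < j then true else if h2 : (l:ℕ) = j then false
      else ω' ⟨(l:ℕ)-(j+1), by have := l.2; omega⟩ with hwdef
    have hpre : ∀ l : Fin n, (l:ℕ) < j → ω l = true := by
      intro l hl
      rw [hwdef]
      simp only
      rw [dif_pos hl]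
    have hj0 : ∀ l : Fin n, (l:ℕ) = j → ω l = false := by
      intro l hl
      rw [hwdef]
      simp only
      rw [dif_neg (by omega), dif_pos hl]
    have hshift : (fun l : Fin (n-1-j) => ω ⟨j+1+(l:ℕ), by have := l.2; omega⟩) = ω' := by
      funext l
      have hl2 := l.2
      rw [hwdef]
      simp only
      rw [dif_neg (by omega), dif_neg (by omega)]
      congr 1
      apply Fin.ext
      simp
    refine ⟨?_, hpre, hj0⟩
    apply (firstRun_shift hk hkn hj ω hpre hj0).2
    rw [hshift]
    exact hω'
  · intro ω hω
    simp only [Finset.mem_filter, Finset.mem_univ, true_and] at hω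
    funext l
    beta_reduce
    by_cases h1 : (l:ℕ) < j
    · rw [dif_pos h1]
      exact (hω.2.1 l h1).symm
    · by_cases h2 : (l:ℕ) = j
      · rw [dif_neg h1, dif_pos h2]
        exact (hω.2.2 l h2).symm
      · rw [dif_neg h1, dif_neg h2]
        congr 1
        apply Fin.ext
        simp
        omega
  · intro ω' hω'
    funext l
    have hl2 := l.2
    simp only
    rw [dif_neg (by omega), dif_neg (by omega)]
    congr 1
    apply Fin.ext
    simp
  · intro ω hω
    simp only [Finset.mem_filter, Finset.mem_univ, true_and] at hω
    set ω' : Fin (n-1-j) → Bool :=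
      fun l : Fin (n-1-j) => ω ⟨j+1+(l:ℕ), by have := l.2; omega⟩ with hw'
    rw [wt_prod p ω, wt_prod p ω']
    have hsplit := Finset.prod_range_add (wtf n p ω) (j+1) (n-1-j)
    rw [show (j+1)+(n-1-j) = n by omega] at hsplit
    rw [hsplit]
    have hfirst : ∏ t ∈ Finset.range (j+1), wtf n p ω t = p ^ j * (1-p) := by
      rw [Finset.prod_range_succ]
      have hpj : ∀ t ∈ Finset.range j, wtf n p ω t = p := by
        intro t ht
        simp only [Finset.mem_range] at ht
        rw [wtf, dif_pos (by omega : t < n)]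
        rw [hω.2.1 ⟨t, by omega⟩ ht]
        simp
      rw [Finset.prod_congr rfl hpj, Finset.prod_const, Finset.card_range]
      have : wtf n p ω j = 1 - p := by
        rw [wtf, dif_pos (by omega : j < n)]
        rw [hω.2.2 ⟨j, by omega⟩ rfl]
        simp
      rw [this]
    have hsecond : ∀ t ∈ Finset.range (n-1-j), wtf n p ω ((j+1)+t) = wtf (n-1-j) p ω' t := by
      intro t ht
      simp only [Finset.mem_range] at ht
      rw [wtf, wtf, dif_pos (by omega : (j+1)+t < n), dif_pos ht]
    rw [hfirst, Finset.prod_congr rfl hsecond]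
    ring

lemma fk_rec {k n : ℕ} (hk : 1 ≤ k) (p : ℝ) (hn : k < n) :
    fk k p n = ∑ j ∈ Finset.range (min (n-k) k), (1-p) * p^j * fk k p (n-1-j) := by
  have hcover : ∀ ω : Fin n → Bool, firstRun k n ω →
      ∃ j < min (n-k) k, (∀ l : Fin n, (l:ℕ) < j → ω l = true)
        ∧ (∀ l : Fin n, (l:ℕ) = j → ω l = false) := by
    intro ω hfr
    have hex : ∃ t, ∃ h : t < n, ω ⟨t, h⟩ = false := by
      by_contra hallt
      push_neg at hallt
      have htrue : ∀ l : Fin n, ω l = true := by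
        intro l
        have h1 := hallt (l:ℕ) l.2
        simpa using h1
      exact hfr.2 k hn ⟨le_rfl, by omega, fun l _ _ => htrue l⟩
    obtain ⟨hjn, hjf⟩ := Nat.find_spec hex
    set j := Nat.find hex with hjdef
    have hprefix : ∀ l : Fin n, (l:ℕ) < j → ω l = true := by
      intro l hl
      have h1 := Nat.find_min hex hl
      push_neg at h1
      have h2 := h1 l.2
      simpa using h2
    have hlt1 : j < n - k := by
      by_contra hcon
      have h1 := hfr.1.2.2 ⟨j, hjn⟩ (by simp; omega) (by simp; omega)
      rw [h1] at hjf
      exact absurd hjf (by simp)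
    have hlt2 : j < k := by
      by_contra hcon
      refine hfr.2 k hn ⟨le_rfl, by omega, fun l _ h2 => hprefix l (by omega)⟩
    refine ⟨j, by omega, hprefix, ?_⟩
    intro l hl
    have : l = ⟨j, hjn⟩ := Fin.ext hl
    rw [this]
    exact hjf
  have hdisj : (↑(Finset.range (min (n-k) k)) : Set ℕ).PairwiseDisjoint
      (fun j => Finset.univ.filter (fun ω : Fin n → Bool => firstRun k n ω
          ∧ (∀ l : Fin n, (l:ℕ) < j → ω l = true)
          ∧ (∀ l : Fin n, (l:ℕ) = j → ω l = false))) := by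
    intro a ha b hb hab
    simp only [Finset.coe_range, Set.mem_Iio] at ha hb
    apply Finset.disjoint_left.2
    intro ω hωa hωb
    simp only [Finset.mem_filter, Finset.mem_univ, true_and] at hωa hωb
    have han : a < n := by omega
    have hbn : b < n := by omega
    rcases Nat.lt_or_ge a b with h | h
    · have h1 := hωb.2.1 ⟨a, han⟩ h
      have h2 := hωa.2.2 ⟨a, han⟩ rfl
      rw [h1] at h2
      exact absurd h2 (by simp)
    · have hba : b < a := by omega
      have h1 := hωa.2.1 ⟨b, hbn⟩ hba
      have h2 := hωb.2.2 ⟨b, hbn⟩ rfl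
      rw [h1] at h2
      exact absurd h2 (by simp)
  have hset : Finset.univ.filter (fun ω : Fin n → Bool => firstRun k n ω)
      = (Finset.range (min (n-k) k)).biUnion
          (fun j => Finset.univ.filter (fun ω : Fin n → Bool => firstRun k n ω
            ∧ (∀ l : Fin n, (l:ℕ) < j → ω l = true)
            ∧ (∀ l : Fin n, (l:ℕ) = j → ω l = false))) := by
    ext ω
    simp only [Finset.mem_filter, Finset.mem_biUnion, Finset.mem_range, Finset.mem_univ,
      true_and]
    constructor
    · intro h
      obtain ⟨j, hj1, hj2⟩ := hcover ω h
      exact ⟨j, hj1, h, hj2⟩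
    · rintro ⟨j, _, h, _⟩
      exact h
  rw [fk, hset, Finset.sum_biUnion hdisj]
  exact Finset.sum_congr rfl fun j hj => sum_fiber hk p hn (Finset.mem_range.1 hj)


lemma lag_sum {k : ℕ} (lam : Fin k → ℂ) (hinj : Function.Injective lam) (t : ℕ) (ht : t < k) :
    (∑ j, lam j ^ t * (∏ i ∈ Finset.univ.erase j, (lam j - lam i))⁻¹)
      = if t = k - 1 then 1 else 0 := by
  classical
  have hprodne : ∀ j : Fin k, (∏ i ∈ Finset.univ.erase j, (lam j - lam i)) ≠ 0 := by
    intro j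
    exact Finset.prod_ne_zero_iff.2 fun i hi =>
      sub_ne_zero.2 (fun h => (Finset.mem_erase.1 hi).1 (hinj h.symm))
  set w : Fin k → ℂ := fun j => (∏ i ∈ Finset.univ.erase j, (lam j - lam i))⁻¹ with hw
  set Q : ℂ[X] :=
    (∑ j, C (lam j ^ t * w j) * ∏ i ∈ Finset.univ.erase j, (X - C (lam i))) - X ^ t with hQ
  have heval : ∀ m, Q.eval (lam m) = 0 := by
    intro m
    simp only [hQ, eval_sub, eval_finset_sum, eval_mul, eval_C, eval_prod, eval_pow, eval_X]
    rw [Finset.sum_eq_single m]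
    · rw [hw]
      rw [mul_assoc, inv_mul_cancel₀ (hprodne m), mul_one, sub_self]
    · intro j _ hjm
      have : (∏ i ∈ Finset.univ.erase j, (lam m - lam i)) = 0 :=
        Finset.prod_eq_zero (Finset.mem_erase.2 ⟨hjm.symm, Finset.mem_univ m⟩) (sub_self _)
      rw [this, mul_zero]
    · simp
  have hdegprod : ∀ j : Fin k,
      (∏ i ∈ Finset.univ.erase j, (X - C (lam i))).natDegree = k - 1 := by
    intro j
    rw [Polynomial.natDegree_prod _ _ (fun i _ => X_sub_C_ne_zero _)]
    simp [Finset.card_erase_of_mem]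
  have hmonprod : ∀ j : Fin k, (∏ i ∈ Finset.univ.erase j, (X - C (lam i))).Monic :=
    fun j => monic_prod_of_monic _ _ (fun i _ => monic_X_sub_C _)
  have hdeg : Q.natDegree < k := by
    apply lt_of_le_of_lt (Polynomial.natDegree_sub_le _ _)
    apply max_lt
    · apply lt_of_le_of_lt (Polynomial.natDegree_sum_le _ _)
      apply (Finset.fold_max_lt _).2
      constructor
      · omega
      · intro j _
        have h1 : (C (lam j ^ t * w j) * ∏ i ∈ Finset.univ.erase j, (X - C (lam i))).natDegree
            ≤ k - 1 := by
          apply natDegree_mul_le.trans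
          rw [natDegree_C, hdegprod j, zero_add]
        simp only [Function.comp_apply]
        omega
    · simpa using ht
  have hQ0 : Q = 0 :=
    Polynomial.eq_zero_of_natDegree_lt_card_of_eval_eq_zero Q hinj heval
      (by simpa using hdeg)
  have hcoeff := congrArg (fun P => Polynomial.coeff P (k - 1)) hQ0
  simp only [hQ, Polynomial.coeff_sub, Polynomial.finset_sum_coeff, Polynomial.coeff_C_mul,
    Polynomial.coeff_X_pow, Polynomial.coeff_zero] at hcoeff
  have hcp : ∀ j : Fin k, (∏ i ∈ Finset.univ.erase j, (X - C (lam i))).coeff (k-1) = 1 := by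
    intro j
    have := (hmonprod j).leadingCoeff
    rwa [Polynomial.leadingCoeff, hdegprod j] at this
  simp only [hcp, mul_one] at hcoeff
  have : (∑ j, lam j ^ t * w j) - (if k - 1 = t then (1:ℂ) else 0) = 0 := hcoeff
  rw [sub_eq_zero] at this
  rw [this]
  by_cases h : t = k - 1 <;> simp [h, eq_comm]

lemma telescope_eval {k : ℕ} (hk : 1 ≤ k) (pc z : ℂ) :
    (z - pc) * (z ^ k - ∑ i ∈ Finset.Icc 1 k, (1 - pc) * pc ^ (i-1) * z ^ (k-i))
      = z ^ (k+1) - z ^ k + (1 - pc) * pc ^ k := by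
  have htel : ∑ i ∈ Finset.Icc 1 k, (pc ^ (i-1) * z ^ (k-i)) * (z - pc) = z ^ k - pc ^ k := by
    have h1 : ∀ i ∈ Finset.Icc 1 k,
        (pc ^ (i-1) * z ^ (k-i)) * (z - pc)
          = pc ^ (i-1) * z ^ (k-(i-1)) - pc ^ i * z ^ (k-i) := by
      intro i hi
      simp only [Finset.mem_Icc] at hi
      have h2 : k - (i-1) = (k - i) + 1 := by omega
      have h3 : pc ^ i = pc ^ (i-1) * pc := by
        conv_lhs => rw [show i = (i-1)+1 by omega]
        rw [pow_succ]
      rw [h2, h3, pow_succ]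
      ring
    rw [Finset.sum_congr rfl h1]
    rw [← Finset.Ico_add_one_right_eq_Icc, Finset.sum_Ico_eq_sum_range]
    simp only [Nat.add_sub_cancel, Nat.succ_sub_one]
    have : ∀ j ∈ Finset.range k,
        pc ^ (1 + j - 1) * z ^ (k - (1 + j - 1)) - pc ^ (1 + j) * z ^ (k - (1 + j))
          = (fun t => pc ^ t * z ^ (k - t)) j - (fun t => pc ^ t * z ^ (k - t)) (j+1) := by
      intro j _
      have e1 : 1 + j - 1 = j := by omega
      have e2 : 1 + j = j + 1 := by omega
      rw [e1, e2]
    rw [Finset.sum_congr rfl this, Finset.sum_range_sub']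
    simp
  have expand : ∑ i ∈ Finset.Icc 1 k, (1 - pc) * pc ^ (i-1) * z ^ (k-i)
      = (1 - pc) * ∑ i ∈ Finset.Icc 1 k, pc ^ (i-1) * z ^ (k-i) := by
    rw [Finset.mul_sum]; congr 1; ext i; ring
  rw [expand]
  have := htel
  rw [← Finset.sum_mul] at this
  linear_combination (pc - 1) * this

lemma root_struct {k : ℕ} (hk : 1 ≤ k) (p : ℝ) (hp0 : 0 < p) (hp1 : p < 1)
    (hne : p ≠ (k : ℝ) / (k + 1)) (lam : Fin k → ℂ) (hinj : Function.Injective lam)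
    (hroot : ∀ j, (lam j) ^ k
      - ∑ i ∈ Finset.Icc 1 k, ((1:ℂ) - p) * (p : ℂ) ^ (i - 1) * (lam j) ^ (k - i) = 0) :
    ∀ j, ((lam j - (p:ℂ)) * ∏ i ∈ Finset.univ.erase j, (lam j - lam i)
        = ((k:ℂ)+1) * lam j ^ (k-1) * (lam j - (k:ℂ)/((k:ℂ)+1)))
      ∧ lam j ≠ (p:ℂ) ∧ lam j ≠ (k:ℂ)/((k:ℂ)+1) := by
  classical
  set pc : ℂ := (p : ℂ) with hpc
  have hk1 : ((k:ℂ) + 1) ≠ 0 := by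
    have := Nat.cast_add_one_ne_zero (R := ℂ) k
    push_cast at this
    exact this
  set Apoly : ℂ[X] := Lagrange.nodal Finset.univ lam with hApoly
  set S : ℂ[X] := ∑ i ∈ Finset.Icc 1 k, C ((1-pc) * pc^(i-1)) * X^(k-i) with hS
  set Aexp : ℂ[X] := X^k - S with hAexp
  have heAexp : ∀ z : ℂ, Aexp.eval z
      = z^k - ∑ i ∈ Finset.Icc 1 k, (1-pc)*pc^(i-1)*z^(k-i) := by
    intro z
    simp [hAexp, hS, eval_finset_sum]
  have hSdeg : S.degree < (k : ℕ) := by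
    apply lt_of_le_of_lt (Polynomial.degree_sum_le _ _)
    rw [Finset.sup_lt_iff (by exact_mod_cast WithBot.bot_lt_coe k)]
    intro i hi
    simp only [Finset.mem_Icc] at hi
    apply lt_of_le_of_lt (Polynomial.degree_C_mul_X_pow_le _ _)
    exact_mod_cast (by omega : k - i < k)
  have hAexpMonic : Aexp.Monic := Polynomial.monic_X_pow_sub hSdeg
  have hAexpdeg : Aexp.degree = (k : ℕ) := by
    rw [hAexp, Polynomial.degree_sub_eq_left_of_degree_lt (by rwa [Polynomial.degree_X_pow]),
      Polynomial.degree_X_pow]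
  have hApolyMonic : Apoly.Monic :=
    monic_prod_of_monic _ _ (fun i _ => monic_X_sub_C _)
  have hApolydeg : Apoly.degree = (k : ℕ) := by
    rw [hApoly, Lagrange.nodal]
    rw [Polynomial.degree_prod]
    simp [Polynomial.degree_X_sub_C]
  have hEq : Aexp = Apoly := by
    rw [← sub_eq_zero]
    by_contra hD
    have hdlt : (Aexp - Apoly).degree < (k : ℕ) := by
      rw [← hAexpdeg]
      exact Polynomial.degree_sub_lt (by rw [hAexpdeg, hApolydeg]) hAexpMonic.ne_zero
        (by rw [hAexpMonic.leadingCoeff, hApolyMonic.leadingCoeff])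
    have hnat : (Aexp - Apoly).natDegree < k := by
      rwa [← Polynomial.natDegree_lt_iff_degree_lt hD] at hdlt
    apply hD
    apply Polynomial.eq_zero_of_natDegree_lt_card_of_eval_eq_zero _ hinj
    · intro m
      rw [Polynomial.eval_sub, heAexp]
      have h1 : Apoly.eval (lam m) = 0 :=
        Lagrange.eval_nodal_at_node (Finset.mem_univ m)
      rw [h1, hroot m, sub_zero]
    · simpa using hnat
  have hB : ∀ z : ℂ, (z - pc) * Apoly.eval z = z^(k+1) - z^k + (1-pc)*pc^k := by
    intro z
    rw [← hEq, heAexp]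
    exact telescope_eval hk pc z
  -- lam j ≠ p
  have hevalp : Apoly.eval pc ≠ 0 := by
    have h1 : Apoly.eval pc = pc^k - (k:ℂ) * ((1-pc) * pc^(k-1)) := by
      have hterm : ∀ i ∈ Finset.Icc 1 k,
          (1-pc)*pc^(i-1)*pc^(k-i) = (1-pc)*pc^(k-1) := by
        intro i hi
        simp only [Finset.mem_Icc] at hi
        rw [mul_assoc, ← pow_add]
        congr 2
        omega
      rw [← hEq, heAexp, Finset.sum_congr rfl hterm, Finset.sum_const, Nat.card_Icc]
      simp [nsmul_eq_mul, Nat.add_sub_cancel]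
    have h2 : pc^k - (k:ℂ) * ((1-pc) * pc^(k-1)) = pc^(k-1) * (((k:ℂ)+1)*pc - k) := by
      have : pc ^ k = pc ^ (k-1) * pc := by
        rw [← pow_succ]
        congr 1
        omega
      rw [this]
      ring
    rw [h1, h2]
    apply mul_ne_zero
    · refine pow_ne_zero _ ?_
      rw [hpc]
      exact_mod_cast hp0.ne'
    · intro hcon
      apply hne
      have : pc = (k:ℂ) / ((k:ℂ)+1) := by
        field_simp at hcon ⊢
        linear_combination hcon
      rw [hpc] at this
      have : (p : ℂ) = ((((k:ℝ)) / ((k:ℝ)+1) : ℝ) : ℂ) := by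
        push_cast
        exact this
      exact_mod_cast this
  have hlamne : ∀ j, lam j ≠ pc := by
    intro j hcon
    apply hevalp
    rw [hApoly, Lagrange.eval_nodal]
    exact Finset.prod_eq_zero (Finset.mem_univ j) (by rw [hcon, sub_self])
  -- derivative identity
  have hderiv : ∀ j, (lam j - pc) * ∏ i ∈ Finset.univ.erase j, (lam j - lam i)
      = ((k:ℂ)+1) * lam j ^ k - (k:ℂ) * lam j ^ (k-1) := by
    intro j
    have hBpoly : (X - C pc) * Apoly = X^(k+1) - X^k + C ((1-pc)*pc^k) := by
      apply Polynomial.funext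
      intro z
      simp only [Polynomial.eval_mul, Polynomial.eval_sub, Polynomial.eval_add,
        Polynomial.eval_pow, Polynomial.eval_X, Polynomial.eval_C]
      exact hB z
    have hd := congrArg Polynomial.derivative hBpoly
    rw [Polynomial.derivative_mul, Polynomial.derivative_sub, Polynomial.derivative_X,
      Polynomial.derivative_C, sub_zero, one_mul, Polynomial.derivative_add,
      Polynomial.derivative_sub, Polynomial.derivative_C, Polynomial.derivative_X_pow,
      Polynomial.derivative_X_pow, add_zero] at hd
    have he := congrArg (Polynomial.eval (lam j)) hd
    simp only [Polynomial.eval_add, Polynomial.eval_sub, Polynomial.eval_mul,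
      Polynomial.eval_pow, Polynomial.eval_X, Polynomial.eval_C,
      Polynomial.eval_natCast] at he
    have h0 : Apoly.eval (lam j) = 0 := Lagrange.eval_nodal_at_node (Finset.mem_univ j)
    have hder : (Polynomial.derivative Apoly).eval (lam j)
        = ∏ i ∈ Finset.univ.erase j, (lam j - lam i) := by
      rw [hApoly, Lagrange.eval_nodal_derivative_eval_node_eq (Finset.mem_univ j),
        Lagrange.eval_nodal]
    rw [h0, hder, zero_add] at he
    rw [he]
    have h3 : k + 1 - 1 = k := by omega
    rw [h3]
    push_cast
    ring
  intro j
  have hprodne : (∏ i ∈ Finset.univ.erase j, (lam j - lam i)) ≠ 0 :=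
    Finset.prod_ne_zero_iff.2 fun i hi =>
      sub_ne_zero.2 (fun h => (Finset.mem_erase.1 hi).1 (hinj h.symm))
  have hpowsplit : lam j ^ k = lam j ^ (k-1) * lam j := by
    rw [← pow_succ]
    congr 1
    omega
  have hmain : (lam j - pc) * ∏ i ∈ Finset.univ.erase j, (lam j - lam i)
      = ((k:ℂ)+1) * lam j ^ (k-1) * (lam j - (k:ℂ)/((k:ℂ)+1)) := by
    rw [hderiv j, hpowsplit]
    field_simp
  refine ⟨hmain, hlamne j, ?_⟩
  intro hcon
  have : (lam j - pc) * ∏ i ∈ Finset.univ.erase j, (lam j - lam i) = 0 := by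
    rw [hmain, hcon]
    simp
  exact (mul_ne_zero (sub_ne_zero.2 (hlamne j)) hprodne) this

noncomputable def useq (k : ℕ) (p : ℝ) : ℕ → ℝ
  | 0 => p ^ k
  | (m+1) => ∑ i ∈ Finset.range (min (m+1) k), (1-p) * p^i * useq k p (m-i)
decreasing_by exact Nat.lt_succ_of_le (Nat.sub_le m i)

lemma useq_eq_H {k : ℕ} (hk : 1 ≤ k) (p : ℝ) (lam : Fin k → ℂ)
    (hinj : Function.Injective lam)
    (hroot : ∀ j, (lam j) ^ k
      - ∑ i ∈ Finset.Icc 1 k, ((1:ℂ) - p) * (p:ℂ) ^ (i - 1) * (lam j) ^ (k - i) = 0) :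
    ∀ m, ((useq k p m : ℝ) : ℂ)
      = (p:ℂ)^k * ∑ j, lam j ^ (m + (k-1))
          * (∏ i ∈ Finset.univ.erase j, (lam j - lam i))⁻¹ := by
  intro m
  induction m using Nat.strong_induction_on with
  | _ m IH =>
    match m with
    | 0 =>
      rw [useq]
      have hl := lag_sum lam hinj (k-1) (by omega)
      rw [if_pos rfl] at hl
      simp only [zero_add]
      rw [hl]
      push_cast
      ring
    | (m+1) =>
      have hroot' : ∀ j, lam j ^ k
          = ∑ i ∈ Finset.Icc 1 k, ((1:ℂ)-p) * (p:ℂ)^(i-1) * lam j^(k-i) := by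
        intro j
        have := hroot j
        rwa [sub_eq_zero] at this
      have hpow : ∀ j, lam j ^ (m+1+(k-1))
          = ∑ i ∈ Finset.Icc 1 k, ((1:ℂ)-p) * (p:ℂ)^(i-1) * lam j ^ (m+k-i) := by
        intro j
        have h1 : m+1+(k-1) = m + k := by omega
        rw [h1]
        have h2 : lam j ^ (m+k) = lam j ^ m * lam j ^ k := by rw [← pow_add]
        rw [h2, hroot', Finset.mul_sum]
        refine Finset.sum_congr rfl fun i hi => ?_
        simp only [Finset.mem_Icc] at hi
        have h3 : m + (k - i) = m + k - i := by omega
        rw [← pow_add] at *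
        rw [← h3]
        ring
      have stepA : (∑ j, lam j ^ (m+1+(k-1))
            * (∏ i ∈ Finset.univ.erase j, (lam j - lam i))⁻¹)
          = ∑ i ∈ Finset.Icc 1 k, ((1:ℂ)-p) * (p:ℂ)^(i-1)
              * ∑ j, lam j ^ (m+k-i) * (∏ l ∈ Finset.univ.erase j, (lam j - lam l))⁻¹ := by
        rw [Finset.sum_congr rfl (fun j _ => by rw [hpow j, Finset.sum_mul])]
        rw [Finset.sum_comm]
        refine Finset.sum_congr rfl fun i _ => ?_
        rw [Finset.mul_sum]
        refine Finset.sum_congr rfl fun j _ => by ring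
      have stepB : ∑ i ∈ Finset.Icc 1 k, ((1:ℂ)-p) * (p:ℂ)^(i-1)
              * ∑ j, lam j ^ (m+k-i) * (∏ l ∈ Finset.univ.erase j, (lam j - lam l))⁻¹
          = ∑ i ∈ Finset.Icc 1 (min (m+1) k), ((1:ℂ)-p) * (p:ℂ)^(i-1)
              * ∑ j, lam j ^ (m+k-i) * (∏ l ∈ Finset.univ.erase j, (lam j - lam l))⁻¹ := by
        symm
        apply Finset.sum_subset
        · intro i hi
          simp only [Finset.mem_Icc] at hi ⊢
          omega
        · intro i hi hni
          simp only [Finset.mem_Icc] at hi hni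
          have h1 : m + k - i < k := by omega
          have h2 : m + k - i ≠ k - 1 := by omega
          rw [lag_sum lam hinj _ h1, if_neg h2, mul_zero]
      have stepC : ∑ i ∈ Finset.Icc 1 (min (m+1) k), ((1:ℂ)-p) * (p:ℂ)^(i-1)
              * ((p:ℂ)^k * ∑ j, lam j ^ (m+k-i)
                  * (∏ l ∈ Finset.univ.erase j, (lam j - lam l))⁻¹)
          = ∑ i' ∈ Finset.range (min (m+1) k),
              ((1:ℂ)-p) * (p:ℂ)^i' * ((useq k p (m-i') : ℝ) : ℂ) := by
        rw [← Finset.Ico_add_one_right_eq_Icc, Finset.sum_Ico_eq_sum_range]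
        refine Finset.sum_congr rfl fun i' hi' => ?_
        simp only [Finset.mem_range] at hi'
        have hle : i' ≤ m := by omega
        have hexp : m + k - (1 + i') = (m - i') + (k-1) := by omega
        have hIH := IH (m - i') (by omega)
        rw [hexp, ← hIH]
        have he1 : 1 + i' - 1 = i' := by omega
        rw [he1]
      rw [useq]
      push_cast
      rw [stepA, stepB, Finset.mul_sum, ← stepC]
      refine Finset.sum_congr rfl fun i _ => by ring


lemma fk_eq_useq {k : ℕ} (hk : 1 ≤ k) (p : ℝ) : ∀ m, fk k p (k+m) = useq k p m := by
  intro m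
  induction m using Nat.strong_induction_on with
  | _ m IH =>
    match m with
    | 0 =>
      rw [useq]
      simpa using fk_self hk p
    | (m+1) =>
      have hn : k < k + (m+1) := by omega
      rw [fk_rec hk p hn, useq]
      rw [show k+(m+1)-k = m+1 by omega]
      refine Finset.sum_congr rfl fun j hj => ?_
      simp only [Finset.mem_range] at hj
      rw [show k+(m+1)-1-j = k+(m-j) by omega]
      rw [IH (m-j) (by omega)]

/-- Root expansion of the pmf when `p ≠ k/(k+1)`:
`f_k(n) = (p^k/(k+1)) Σ_j λ_j^{n-k} (λ_j - p)/(λ_j - k/(k+1))` for `n ≥ k`. -/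
theorem pmf_root_expansion (k : ℕ) (hk : 1 ≤ k) (p q : ℝ) (hp0 : 0 < p) (hp1 : p < 1)
    (hq : q = 1 - p) (hne : p ≠ (k : ℝ) / (k + 1)) (lam : Fin k → ℂ)
    (hinj : Function.Injective lam)
    (hroot : ∀ j, (lam j) ^ k
      - ∑ i ∈ Finset.Icc 1 k, (q : ℂ) * (p : ℂ) ^ (i - 1) * (lam j) ^ (k - i) = 0)
    (n : ℕ) (hn : k ≤ n) :
    (fk k p n : ℂ) = (p : ℂ) ^ k / (k + 1) *
      ∑ j, (lam j) ^ (n - k) * ((lam j - p) / (lam j - (k : ℂ) / (k + 1))) := by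
  subst hq
  have hroot' : ∀ j, (lam j) ^ k
      - ∑ i ∈ Finset.Icc 1 k, ((1:ℂ) - p) * (p:ℂ) ^ (i - 1) * (lam j) ^ (k - i) = 0 := by
    intro j
    have := hroot j
    push_cast at this
    exact this
  have rs := root_struct hk p hp0 hp1 hne lam hinj hroot'
  have hm := fk_eq_useq hk p (n - k)
  rw [show k + (n-k) = n by omega] at hm
  rw [hm, useq_eq_H hk p lam hinj hroot' (n-k)]
  have hk1 : ((k:ℂ) + 1) ≠ 0 := by
    have := Nat.cast_add_one_ne_zero (R := ℂ) k
    push_cast at this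
    exact this
  rw [Finset.mul_sum, Finset.mul_sum]
  refine Finset.sum_congr rfl fun j _ => ?_
  obtain ⟨hid, hnep, hnec⟩ := rs j
  have hprodne : (∏ i ∈ Finset.univ.erase j, (lam j - lam i)) ≠ 0 :=
    Finset.prod_ne_zero_iff.2 fun i hi =>
      sub_ne_zero.2 (fun h => (Finset.mem_erase.1 hi).1 (hinj h.symm))
  have hcne : lam j - (k:ℂ)/((k:ℂ)+1) ≠ 0 := sub_ne_zero.2 hnec
  have hkey : (lam j - (p:ℂ)) / (lam j - (k:ℂ)/((k:ℂ)+1))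
      = ((k:ℂ)+1) * lam j ^ (k-1) * (∏ i ∈ Finset.univ.erase j, (lam j - lam i))⁻¹ := by
    have h2 : (lam j - (p:ℂ)) = ((k:ℂ)+1) * lam j ^ (k-1) * (lam j - (k:ℂ)/((k:ℂ)+1))
        * (∏ i ∈ Finset.univ.erase j, (lam j - lam i))⁻¹ := by
      rw [eq_mul_inv_iff_mul_eq₀ hprodne]
      linear_combination hid
    rw [h2, div_eq_iff hcne]
    ring
  rw [pow_add, hkey]
  field_simp
end

section
/- The second factorial moment of the geometric distribution of order k is μ_(2) = 2/(q^2 p^{2k}) - 2(1 + (k+1)q)/(q^2 p^k) + 2/q. -/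
open Finset

attribute [local instance] Classical.propDecidable

/-!
Let `S n = P(N_k > n)`, the total weight of the strings of length `n` without a run. Then
`P(N_k = n + 1) = S n - S (n + 1)`, and the first run ends at trial `n + k + 1` exactly when the
first `n` trials contain no run, trial `n + 1` fails and the next `k` succeed, so
`P(N_k = n + k + 1) = q p^k S n`. Hence `S (n + k) - S (n + k + 1) = q p^k S n`, which makes `S`
decay geometrically. Summation by parts then gives `μ_(2) = 2 ∑ n S n`,
`q p^k ∑ S n = S k = 1 - p^k` and `q p^k ∑ n S n = ∑ S n - k - S k`; solving these yields the
formula.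
-/

noncomputable def weight (p : ℝ) {n : ℕ} (ω : Fin n → Bool) : ℝ :=
  ∏ i, if ω i = true then p else 1 - p

def noRun (k n : ℕ) (ω : Fin n → Bool) : Prop :=
  ∀ m, ¬ hasRunEnd k n ω m

noncomputable def survival (k : ℕ) (p : ℝ) (n : ℕ) : ℝ :=
  ∑ ω ∈ univ.filter (noRun k n), weight p ω

def failureThenRun (k : ℕ) : Fin (k + 1) → Bool :=
  Fin.cons false fun _ => true

section Weight

theorem weight_nonneg {p : ℝ} (hp0 : 0 ≤ p) (hp1 : p ≤ 1) {n : ℕ} (ω : Fin n → Bool) :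
    0 ≤ weight p ω :=
  prod_nonneg fun i _ => by split <;> linarith

variable (p : ℝ) {m n : ℕ}

theorem weight_eq_pow_mul_pow (ω : Fin n → Bool) :
    weight p ω = p ^ #{i | ω i = true} * (1 - p) ^ #{i | ω i = false} := by
  simp [weight, prod_ite, prod_const]

theorem fk_eq_sum_weight (k n : ℕ) :
    fk k p n = ∑ ω ∈ univ.filter (firstRun k n), weight p ω := by
  simp only [fk, weight_eq_pow_mul_pow]

theorem sum_weight (n : ℕ) : ∑ ω : Fin n → Bool, weight p ω = 1 := by
  simpa [weight] using (Fintype.sum_pow (fun b : Bool => if b = true then p else 1 - p) n).symm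

theorem weight_append (u : Fin m → Bool) (v : Fin n → Bool) :
    weight p (Fin.append u v) = weight p u * weight p v := by
  simp [weight, Fin.prod_univ_add]

theorem weight_snoc (ω : Fin n → Bool) (b : Bool) :
    weight p (Fin.snoc ω b : Fin (n + 1) → Bool) = weight p ω * if b = true then p else 1 - p := by
  simp [weight, Fin.prod_univ_castSucc]

theorem weight_failureThenRun (k : ℕ) : weight p (failureThenRun k) = (1 - p) * p ^ k := by
  simp [weight, failureThenRun, Fin.prod_univ_succ]

theorem sum_weight_filter_init (P : (Fin n → Bool) → Prop) :
    ∑ ω ∈ univ.filter (fun ω : Fin (n + 1) → Bool => P (Fin.init ω)), weight p ω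
      = ∑ ω ∈ univ.filter P, weight p ω := by
  rw [sum_filter, sum_filter, ← Fintype.sum_equiv (Fin.snocEquiv fun _ => Bool)
    (fun x => if P (Fin.init (Fin.snoc x.2 x.1 : Fin (n + 1) → Bool)) then
      weight p (Fin.snoc x.2 x.1 : Fin (n + 1) → Bool) else 0) _ fun _ => rfl,
    Fintype.sum_prod_type_right]
  refine sum_congr rfl fun ω _ => ?_
  simp only [Fintype.sum_bool, Fin.init_snoc, weight_snoc, if_true, Bool.false_eq_true, if_false]
  split_ifs <;> ring

end Weight

section Runs

variable {k m n : ℕ}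

theorem hasRunEnd_append_iff {l j : ℕ} (u : Fin m → Bool) (v : Fin l → Bool) :
    hasRunEnd k (m + l) (Fin.append u v) j ↔ k ≤ j ∧ j ≤ m + l ∧
      (∀ i : Fin m, j - k ≤ i → (i : ℕ) < j → u i = true) ∧
      ∀ t : Fin l, j - k ≤ m + t → m + t < j → v t = true := by
  simp [hasRunEnd, Fin.forall_fin_add]

theorem hasRunEnd_init_iff {j : ℕ} (ω : Fin (n + 1) → Bool) (hj : j ≤ n) :
    hasRunEnd k n (Fin.init ω) j ↔ hasRunEnd k (n + 1) ω j := by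
  simp [hasRunEnd, Fin.forall_fin_succ', Fin.init, hj, Nat.le_succ_of_le hj, hj.not_gt]

theorem noRun_init_iff (ω : Fin (n + 1) → Bool) :
    noRun k n (Fin.init ω) ↔ ∀ j ≤ n, ¬ hasRunEnd k (n + 1) ω j := by
  refine ⟨fun h j hj => (hasRunEnd_init_iff ω hj).not.mp (h j), fun h j hr => ?_⟩
  exact h j hr.2.1 ((hasRunEnd_init_iff ω hr.2.1).mp hr)

theorem noRun_succ_iff (ω : Fin (n + 1) → Bool) :
    noRun k (n + 1) ω ↔ noRun k n (Fin.init ω) ∧ ¬ hasRunEnd k (n + 1) ω (n + 1) := by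
  rw [noRun_init_iff]
  refine ⟨fun h => ⟨fun j _ => h j, h _⟩, fun ⟨h, h'⟩ j hj => ?_⟩
  obtain hjn | rfl : j ≤ n ∨ j = n + 1 := by have := hj.2.1; omega
  exacts [h j hjn hj, h' hj]

theorem firstRun_succ_iff (ω : Fin (n + 1) → Bool) :
    firstRun k (n + 1) ω ↔ noRun k n (Fin.init ω) ∧ hasRunEnd k (n + 1) ω (n + 1) := by
  simp only [firstRun, noRun_init_iff, Nat.lt_succ_iff, and_comm]

theorem firstRun_append_iff (u : Fin m → Bool) (v : Fin (k + 1) → Bool) :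
    firstRun k (m + (k + 1)) (Fin.append u v) ↔ noRun k m u ∧ v = failureThenRun k := by
  have hv : v = failureThenRun k ↔ v 0 = false ∧ ∀ s : Fin k, v s.succ = true := by
    rw [funext_iff, Fin.forall_fin_succ]
    simp [failureThenRun]
  simp only [hv, firstRun, noRun, hasRunEnd_append_iff, Fin.forall_fin_succ, Fin.val_zero,
    Fin.val_succ]
  constructor
  · rintro ⟨⟨-, -, -, -, hrun⟩, hfirst⟩
    have hsucc : ∀ s : Fin k, v s.succ = true := fun s => hrun s (by omega) (by omega)
    refine ⟨fun j ⟨hkj, hjm, hpre⟩ => hfirst j (by omega)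
      ⟨hkj, by omega, hpre, fun _ h => by omega, fun _ _ h => by omega⟩, ?_, hsucc⟩
    -- otherwise trials `m + 1, …, m + k` already form a run
    by_contra h0
    exact hfirst (m + k) (by omega) ⟨le_add_self, by omega, fun i h _ => by omega,
      fun _ _ => by simpa using h0, fun s _ _ => hsucc s⟩
  · rintro ⟨hu, h0, hsucc⟩
    refine ⟨⟨by omega, le_rfl, fun i h _ => by omega, fun h _ => by omega, fun s _ _ => hsucc s⟩,
      ?_⟩
    rintro j hj ⟨hkj, -, hpre, hv0, -⟩
    rcases le_or_gt j m with hjm | hjm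
    · exact hu j ⟨hkj, hjm, hpre⟩
    · simpa [h0] using hv0 (by omega) (by omega)

end Runs

theorem survival_eq_survival_succ_add_fk (k : ℕ) (p : ℝ) (n : ℕ) :
    survival k p n = survival k p (n + 1) + fk k p (n + 1) := by
  rw [survival, survival, fk_eq_sum_weight, ← sum_weight_filter_init,
    ← sum_filter_not_add_sum_filter _ (fun ω => hasRunEnd k (n + 1) ω (n + 1)),
    filter_filter, filter_filter]
  congr 2 <;> ext ω <;>
    simp only [mem_filter, mem_univ, true_and, noRun_succ_iff, firstRun_succ_iff]

theorem fk_add_succ (k : ℕ) (p : ℝ) (m : ℕ) :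
    fk k p (m + (k + 1)) = (1 - p) * p ^ k * survival k p m := by
  rw [fk_eq_sum_weight, sum_filter, ← Fintype.sum_equiv (Fin.appendEquiv m (k + 1))
    (fun x => if firstRun k _ (Fin.append x.1 x.2) then weight p (Fin.append x.1 x.2) else 0) _
    fun _ => rfl, Fintype.sum_prod_type, survival, sum_filter, mul_sum]
  refine sum_congr rfl fun u _ => ?_
  simp only [firstRun_append_iff, weight_append, ite_and]
  split_ifs <;> simp [weight_failureThenRun, mul_comm]

theorem survival_add_sub_survival_succ_add (k : ℕ) (p : ℝ) (n : ℕ) :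
    survival k p (n + k) - survival k p (n + 1 + k) = (1 - p) * p ^ k * survival k p n := by
  rw [← fk_add_succ, survival_eq_survival_succ_add_fk k p (n + k), add_right_comm n 1 k,
    ← add_assoc]
  ring

theorem survival_of_lt {k n : ℕ} (hn : n < k) (p : ℝ) : survival k p n = 1 := by
  rw [survival, filter_true_of_mem fun ω _ j hj => by have := hj.1; have := hj.2.1; omega,
    sum_weight]

theorem survival_self (k : ℕ) (p : ℝ) : survival k p k = 1 - p ^ k := by
  have hrun (ω : Fin k → Bool) : noRun k k ω ↔ ω ≠ fun _ => true := by
    refine ⟨fun h hω => h k ⟨le_rfl, le_rfl, fun j _ _ => by simp [hω]⟩, fun h j hj => h ?_⟩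
    obtain rfl : j = k := le_antisymm hj.2.1 hj.1
    exact funext fun i => hj.2.2 i (by simp) i.isLt
  rw [survival, filter_congr fun ω _ => hrun ω, filter_ne', sum_erase_eq_sub (mem_univ _),
    sum_weight]
  simp [weight]

section Survival

variable {k : ℕ} {p : ℝ}

theorem fk_nonneg (hp0 : 0 ≤ p) (hp1 : p ≤ 1) (n : ℕ) : 0 ≤ fk k p n := by
  rw [fk_eq_sum_weight]
  exact sum_nonneg fun ω _ => weight_nonneg hp0 hp1 ω

theorem survival_nonneg (hp0 : 0 ≤ p) (hp1 : p ≤ 1) (n : ℕ) : 0 ≤ survival k p n :=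
  sum_nonneg fun ω _ => weight_nonneg hp0 hp1 ω

theorem survival_le_one (hp0 : 0 ≤ p) (hp1 : p ≤ 1) (n : ℕ) : survival k p n ≤ 1 := by
  rw [survival, ← sum_weight p n]
  exact sum_le_sum_of_subset_of_nonneg (subset_univ _) fun ω _ _ => weight_nonneg hp0 hp1 ω

theorem survival_succ_le (hp0 : 0 ≤ p) (hp1 : p ≤ 1) (n : ℕ) :
    survival k p (n + 1) ≤ survival k p n := by
  linarith [survival_eq_survival_succ_add_fk k p n, fk_nonneg (k := k) hp0 hp1 (n + 1)]

theorem survival_add_succ_le (hp0 : 0 ≤ p) (hp1 : p ≤ 1) (n : ℕ) :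
    survival k p (n + (k + 1)) ≤ (1 - (1 - p) * p ^ k) * survival k p n := by
  have hstep := survival_add_sub_survival_succ_add k p n
  have hanti := antitone_nat_of_succ_le (survival_succ_le (k := k) hp0 hp1) (Nat.le_add_right n k)
  rw [← add_assoc, add_right_comm]
  linarith

end Survival

theorem le_pow_div_pow_of_le_pow_mul {a : ℕ → ℝ} {d : ℕ} {ρ : ℝ} (hd : 0 < d) (hρ0 : 0 < ρ)
    (hρ1 : ρ ≤ 1) (ha1 : ∀ n, a n ≤ 1) (hdecay : ∀ n, a (n + d) ≤ ρ ^ d * a n) (n : ℕ) :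
    a n ≤ ρ ^ n / ρ ^ d := by
  induction n using Nat.strong_induction_on with
  | _ n ih =>
    rcases lt_or_ge n d with hnd | hdn
    · exact (ha1 n).trans <|
        (one_le_div (pow_pos hρ0 d)).mpr (pow_le_pow_of_le_one hρ0.le hρ1 hnd.le)
    · obtain ⟨m, rfl⟩ := Nat.exists_eq_add_of_le' hdn
      calc a (m + d) ≤ ρ ^ d * a m := hdecay m
        _ ≤ ρ ^ d * (ρ ^ m / ρ ^ d) := by gcongr; exact ih m (by omega)
        _ = ρ ^ (m + d) / ρ ^ d := by field_simp; ring

theorem summable_pow_mul_of_le_pow_mul {a : ℕ → ℝ} {d : ℕ} {ρ : ℝ} (hd : 0 < d) (hρ0 : 0 < ρ)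
    (hρ1 : ρ < 1) (ha0 : ∀ n, 0 ≤ a n) (ha1 : ∀ n, a n ≤ 1)
    (hdecay : ∀ n, a (n + d) ≤ ρ ^ d * a n) (j : ℕ) :
    Summable fun n : ℕ => (n : ℝ) ^ j * a n := by
  have hgeom : Summable fun n : ℕ => (n : ℝ) ^ j * ρ ^ n / ρ ^ d :=
    (summable_pow_mul_geometric_of_norm_lt_one (R := ℝ) j
      (by rwa [Real.norm_of_nonneg hρ0.le])).div_const _
  refine Summable.of_nonneg_of_le (fun n => mul_nonneg (by positivity) (ha0 n)) (fun n => ?_) hgeom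
  rw [mul_div_assoc]
  exact mul_le_mul_of_nonneg_left (le_pow_div_pow_of_le_pow_mul hd hρ0 hρ1.le ha1 hdecay n)
    (by positivity)

theorem hasSum_mul_sub_succ {R : Type*} [Ring R] [TopologicalSpace R] [IsTopologicalRing R]
    [T2Space R] {u a : ℕ → R} (h₁ : Summable fun n => u (n + 1) * a n)
    (h₂ : Summable fun n => u n * a n) :
    HasSum (fun n => u (n + 1) * (a n - a (n + 1)))
      (u 0 * a 0 + ∑' n, (u (n + 1) - u n) * a n) := by
  have h₃ : HasSum (fun n => u (n + 1) * a (n + 1)) (∑' n, u n * a n - u 0 * a 0) := by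
    simpa using (hasSum_nat_add_iff' 1).mpr h₂.hasSum
  have hsum : u 0 * a 0 + ∑' n, (u (n + 1) - u n) * a n
      = ∑' n, u (n + 1) * a n - (∑' n, u n * a n - u 0 * a 0) := by
    simp_rw [sub_mul]
    rw [h₁.tsum_sub h₂]
    abel
  rw [hsum]
  simpa only [mul_sub] using h₁.hasSum.sub h₃

section Moments

variable {k : ℕ} {p : ℝ}

theorem summable_pow_mul_survival (hp0 : 0 < p) (hp1 : p < 1) (i j : ℕ) :
    Summable fun n : ℕ => (n : ℝ) ^ j * survival k p (n + i) := by
  set r := 1 - (1 - p) * p ^ k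
  have hr0 : 0 < r := by nlinarith [pow_le_one₀ hp0.le hp1.le (n := k)]
  have hr1 : r < 1 := by have := pow_pos hp0 k; nlinarith
  set ρ := r ^ ((k + 1 : ℕ) : ℝ)⁻¹
  have hρ : ρ ^ (k + 1) = r := Real.rpow_inv_natCast_pow hr0.le k.succ_ne_zero
  refine summable_pow_mul_of_le_pow_mul (d := k + 1) (ρ := ρ) k.succ_pos
    (Real.rpow_pos_of_pos hr0 _) (Real.rpow_lt_one hr0.le hr1 (by positivity))
    (fun n => survival_nonneg hp0.le hp1.le _) (fun n => survival_le_one hp0.le hp1.le _)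
    (fun n => ?_) j
  rw [hρ, add_right_comm]
  exact survival_add_succ_le hp0.le hp1.le (n + i)

theorem hasSum_descFactorial_two_mul_fk (hp0 : 0 < p) (hp1 : p < 1) :
    HasSum (fun n : ℕ => (n.descFactorial 2 : ℝ) * fk k p n)
      (2 * ∑' n : ℕ, (n : ℝ) * survival k p n) := by
  have hS (j : ℕ) := summable_pow_mul_survival (k := k) hp0 hp1 0 j
  simp only [add_zero] at hS
  have h := hasSum_mul_sub_succ (u := fun n : ℕ => (n : ℝ) * (n - 1)) (a := survival k p)
    (((hS 2).add (hS 1)).congr fun n => by push_cast; ring)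
    (((hS 2).sub (hS 1)).congr fun n => by ring)
  have hdiff (n : ℕ) : (((n + 1 : ℕ) : ℝ) * ((n + 1 : ℕ) - 1) - n * (n - 1)) * survival k p n
      = 2 * (n * survival k p n) := by push_cast; ring
  simp only [Nat.cast_zero, zero_mul, zero_add, hdiff, tsum_mul_left] at h
  refine (hasSum_nat_add_iff' 1).mp ?_
  simp only [range_one, sum_singleton, Nat.zero_descFactorial_succ, Nat.cast_zero, zero_mul,
    sub_zero]
  refine h.congr_fun fun n => ?_
  rw [survival_eq_survival_succ_add_fk k p n, Nat.succ_descFactorial_succ, Nat.descFactorial_one]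
  push_cast
  ring

theorem mul_tsum_survival (hp0 : 0 < p) (hp1 : p < 1) :
    (1 - p) * p ^ k * ∑' n, survival k p n = 1 - p ^ k := by
  have hS (j : ℕ) := summable_pow_mul_survival (k := k) hp0 hp1 k j
  have h := hasSum_mul_sub_succ (u := fun _ => (1 : ℝ)) (a := fun n => survival k p (n + k))
    (by simpa using hS 0) (by simpa using hS 0)
  simp only [one_mul, sub_self, zero_mul, tsum_zero, add_zero, zero_add,
    survival_add_sub_survival_succ_add, survival_self] at h
  rw [← tsum_mul_left, h.tsum_eq]

theorem mul_tsum_mul_survival (hp0 : 0 < p) (hp1 : p < 1) :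
    (1 - p) * p ^ k * ∑' n : ℕ, (n : ℝ) * survival k p n
      = ∑' n, survival k p n - k - (1 - p ^ k) := by
  have hS (j : ℕ) := summable_pow_mul_survival (k := k) hp0 hp1 k j
  have h := hasSum_mul_sub_succ (u := fun n : ℕ => (n : ℝ) - 1)
    (a := fun n => survival k p (n + k))
    ((hS 1).congr fun n => by push_cast; ring) (((hS 1).sub (hS 0)).congr fun n => by ring)
  push_cast at h
  simp only [survival_add_sub_survival_succ_add, add_sub_cancel_right, zero_sub, sub_sub_cancel,
    one_mul, neg_one_mul, zero_add] at h
  have hS0 : Summable (survival k p) := by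
    simpa using summable_pow_mul_survival (k := k) hp0 hp1 0 0
  have hhead : ∑ i ∈ range k, survival k p i = k := by
    rw [sum_congr rfl fun i hi => survival_of_lt (mem_range.mp hi) p]
    simp
  rw [← hS0.sum_add_tsum_nat_add k, hhead, ← survival_self k p, ← tsum_mul_left,
    tsum_congr fun n => mul_left_comm _ _ _, h.tsum_eq]
  ring

end Moments

theorem second_factorial_moment_general (k : ℕ) (p q : ℝ) (hp0 : 0 < p) (hp1 : p < 1)
    (hq : q = 1 - p) :
    ∑' n : ℕ, (n.descFactorial 2 : ℝ) * fk k p n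
      = 2 / (q ^ 2 * p ^ (2 * k)) - 2 * (1 + (k + 1) * q) / (q ^ 2 * p ^ k) + 2 / q := by
  subst hq
  have hq0 : 1 - p ≠ 0 := by linarith
  have hpk : p ^ k ≠ 0 := (pow_pos hp0 k).ne'
  have hc : (1 - p) * p ^ k ≠ 0 := mul_ne_zero hq0 hpk
  have hA : ∑' n, survival k p n = (1 - p ^ k) / ((1 - p) * p ^ k) := by
    rw [← mul_tsum_survival hp0 hp1, mul_div_cancel_left₀ _ hc]
  have hB : ∑' n : ℕ, (n : ℝ) * survival k p n
      = (∑' n, survival k p n - k - (1 - p ^ k)) / ((1 - p) * p ^ k) := by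
    rw [← mul_tsum_mul_survival hp0 hp1, mul_div_cancel_left₀ _ hc]
  rw [(hasSum_descFactorial_two_mul_fk hp0 hp1).tsum_eq, hB, hA]
  field_simp
  ring

/-- The second factorial moment:
`μ_(2) = 2/(q^2 p^{2k}) - 2(1 + (k+1)q)/(q^2 p^k) + 2/q`. -/
theorem second_factorial_moment (k : ℕ) (hk : 1 ≤ k) (p q : ℝ) (hp0 : 0 < p) (hp1 : p < 1)
    (hq : q = 1 - p) :
    ∑' n : ℕ, (n.descFactorial 2 : ℝ) * fk k p n
      = 2 / (q ^ 2 * p ^ (2 * k)) - 2 * (1 + (k + 1) * q) / (q ^ 2 * p ^ k) + 2 / q :=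
  second_factorial_moment_general k p q hp0 hp1 hq
end
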